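/- arXiv:math/0510371 — 5 statements merged into one kernel-verified Lean document; each statement's English description precedes it below -/
import Mathlib

section
/- Let Q : ℤ → ℝ, P : ℤ → ℂ, and let C : ℤ → ℂ satisfy the three-term recurrence Q_{n+1} C_{n+1} + P_n C_n + Q_n C_{n−1} = 0 for all n ∈ ℤ. Then for every integer N ≥ 0 one has ∑_{n=−N}^{N} |C_n|² · Im(P_n) = − Q_{N+1} · Im( C_{N+1} · conj(C_N) ) − Q_{−N} · Im( C_{−N−1} · conj(C_{−N}) ). -/
/-!
Multiplying the recurrence at `n` by `conj C_n` and taking imaginary parts, the real `Q`'s turn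
the two off-diagonal terms into consecutive values of the flux `Q_{n+1} Im(C_{n+1} conj C_n)`,
so `|C_n|² Im P_n` is a difference of fluxes and the sum over `[-N, N]` telescopes.
-/

open Complex ComplexConjugate

theorem Finset.sum_Icc_int_sub_telescope {M : Type*} [AddCommGroup M] (f : ℤ → M) {a b : ℤ}
    (hab : a - 1 ≤ b) : ∑ n ∈ Finset.Icc a b, (f (n - 1) - f n) = f (a - 1) - f b := by
  induction b, hab using Int.leInduction with
  | base => simp
  | succ b hab ih =>
    rw [← Finset.insert_Icc_right_eq_Icc_add_one (by omega), Finset.sum_insert (by simp),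
      ih, add_sub_cancel_right]
    abel

theorem Complex.im_mul_conj_swap (z w : ℂ) : (z * conj w).im = -(w * conj z).im := by
  rw [← Complex.conj_im, map_mul, Complex.conj_conj, mul_comm]

noncomputable def recurrenceFlux (Q : ℤ → ℝ) (C : ℤ → ℂ) (n : ℤ) : ℝ :=
  Q (n + 1) * (C (n + 1) * conj (C n)).im

theorem norm_sq_mul_im_eq_recurrenceFlux_sub {Q : ℤ → ℝ} {P C : ℤ → ℂ} {n : ℤ}
    (hrec : (Q (n + 1) : ℂ) * C (n + 1) + P n * C n + (Q n : ℂ) * C (n - 1) = 0) :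
    ‖C n‖ ^ 2 * (P n).im = recurrenceFlux Q C (n - 1) - recurrenceFlux Q C n := by
  have him := congrArg (fun z => (z * conj (C n)).im) hrec
  simp only [add_mul, mul_assoc, Complex.add_im, Complex.im_ofReal_mul, Complex.mul_conj,
    Complex.normSq_eq_norm_sq, Complex.im_mul_ofReal, zero_mul, Complex.zero_im] at him
  rw [recurrenceFlux, recurrenceFlux, sub_add_cancel, Complex.im_mul_conj_swap (C n)]
  linarith

/-- Identity (1.id): for solutions of the two-sided three-term recurrence
`Q_{n+1} C_{n+1} + P_n C_n + Q_n C_{n-1} = 0` with real off-diagonal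
coefficients `Q_n`, one has
`∑_{n=-N}^{N} |C_n|² Im P_n
  = -Q_{N+1} Im(C_{N+1} conj C_N) - Q_{-N} Im(C_{-N-1} conj C_{-N})`. -/
theorem recurrence_identity (Q : ℤ → ℝ) (P : ℤ → ℂ) (C : ℤ → ℂ)
    (hrec : ∀ n : ℤ, (Q (n + 1) : ℂ) * C (n + 1) + P n * C n + (Q n : ℂ) * C (n - 1) = 0) :
    ∀ N : ℕ,
      ∑ n ∈ Finset.Icc (-(N : ℤ)) (N : ℤ), ‖C n‖ ^ 2 * (P n).im
        = -(Q ((N : ℤ) + 1)) * (C ((N : ℤ) + 1) * (starRingEnd ℂ) (C (N : ℤ))).im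
          - Q (-(N : ℤ)) * (C (-(N : ℤ) - 1) * (starRingEnd ℂ) (C (-(N : ℤ)))).im := by
  intro N
  rw [Finset.sum_congr rfl fun n _ => norm_sq_mul_im_eq_recurrenceFlux_sub (hrec n),
    Finset.sum_Icc_int_sub_telescope _ (by omega), recurrenceFlux, recurrenceFlux,
    sub_add_cancel, Complex.im_mul_conj_swap (C (-(N : ℤ)))]
  ring
end

section
/- For every α > 0 there exist functions u_0, u_1 ∈ H¹(ℝ) such that ∫_ℝ ( |u_0′(x)|² + |u_1′(x)|² + |u_1(x)|² ) dx < α · Re( u_1(0) · conj(u_0(0)) ). -/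
/-! The test functions are the two-sided exponentials `c e^{-δ|x|}`, whose Dirichlet energy
is `c²δ`, whose `L²` mass is `c²/δ`, and whose value at `0` is `c`. Taking `u₁ = e^{-|x|}`
(total cost `2`, value `1` at `0`) and `u₀ = c e^{-δ|x|}` with `c = 4/α`, `δ = α²/16`, the
left-hand side is `c²δ + 2 = 3` while the right-hand side is `αc = 4`: spreading `u₀` out
makes its energy negligible without changing its value at `0`. -/

open Complex MeasureTheory

/-- `f` belongs to the Sobolev space `H¹(ℝ)` with (distributional) derivative `f'`:
`f ∈ L²(ℝ)`, `f' ∈ L²(ℝ)`, and `f` is the continuous (absolutely continuous)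
representative, i.e. `f x = f 0 + ∫_0^x f'`. -/
def MemH1 (f f' : ℝ → ℂ) : Prop :=
  MemLp f 2 volume ∧ MemLp f' 2 volume ∧
    ∀ x : ℝ, f x = f 0 + ∫ t in (0 : ℝ)..x, f' t

noncomputable def expDecay (δ x : ℝ) : ℝ := Real.exp (-δ * |x|)

section ExpDecay

variable {δ : ℝ}

lemma continuous_expDecay (δ : ℝ) : Continuous (expDecay δ) := by
  unfold expDecay; fun_prop

lemma expDecay_zero (δ : ℝ) : expDecay δ 0 = 1 := by
  simp [expDecay]

lemma expDecay_sq (δ x : ℝ) : expDecay δ x ^ 2 = expDecay (2 * δ) x := by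
  rw [expDecay, expDecay, ← Real.exp_nat_mul]; ring_nf

lemma integral_expDecay (hδ : 0 < δ) : ∫ x, expDecay δ x = 2 / δ := by
  simp only [expDecay]
  rw [integral_comp_abs (f := fun x => Real.exp (-δ * x)),
    integral_exp_mul_Ioi (neg_lt_zero.2 hδ)]
  field_simp
  simp

lemma integral_expDecay_sq (hδ : 0 < δ) : ∫ x, expDecay δ x ^ 2 = 1 / δ := by
  simp_rw [expDecay_sq, integral_expDecay (by positivity : 0 < 2 * δ)]
  field_simp

/-- `integral_comp_abs` holds without an integrability hypothesis, so the nonzero value of the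
integral already forces integrability. -/
lemma integrable_expDecay (hδ : 0 < δ) : Integrable (expDecay δ) :=
  Integrable.of_integral_ne_zero (by rw [integral_expDecay hδ]; positivity)

lemma hasDerivAt_expDecay (δ : ℝ) {x : ℝ} (hx : x ≠ 0) :
    HasDerivAt (expDecay δ) (-δ * SignType.sign x * expDecay δ x) x :=
  ((hasDerivAt_abs hx).const_mul (-δ)).exp.congr_deriv (by unfold expDecay; ring)

lemma deriv_expDecay_sq (δ : ℝ) {x : ℝ} (hx : x ≠ 0) :
    deriv (expDecay δ) x ^ 2 = δ ^ 2 * expDecay (2 * δ) x := by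
  have hsign : (SignType.sign x : ℝ) ^ 2 = 1 := by
    rcases hx.lt_or_gt with h | h <;> simp [h]
  rw [(hasDerivAt_expDecay δ hx).deriv, ← expDecay_sq]
  linear_combination (δ * expDecay δ x) ^ 2 * hsign

lemma integral_deriv_expDecay_sq (hδ : 0 < δ) : ∫ x, deriv (expDecay δ) x ^ 2 = δ := by
  have hae : (fun x => deriv (expDecay δ) x ^ 2) =ᵐ[volume]
      fun x => δ ^ 2 * expDecay (2 * δ) x := by
    filter_upwards [compl_mem_ae_iff.2 (measure_singleton (0 : ℝ))] with x hx
    exact deriv_expDecay_sq δ hx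
  rw [integral_congr_ae hae, integral_const_mul, integral_expDecay (by positivity)]
  field_simp

lemma memLp_expDecay (hδ : 0 < δ) : MemLp (expDecay δ) 2 := by
  rw [memLp_two_iff_integrable_sq (continuous_expDecay δ).aestronglyMeasurable]
  simpa only [expDecay_sq] using integrable_expDecay (by positivity : 0 < 2 * δ)

lemma memLp_deriv_expDecay (hδ : 0 < δ) : MemLp (deriv (expDecay δ)) 2 := by
  rw [memLp_two_iff_integrable_sq (measurable_deriv _).aestronglyMeasurable]
  exact Integrable.of_integral_ne_zero (by rw [integral_deriv_expDecay_sq hδ]; positivity)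

lemma expDecay_eq_add_integral_deriv (hδ : 0 < δ) (x : ℝ) :
    expDecay δ x = expDecay δ 0 + ∫ t in (0 : ℝ)..x, deriv (expDecay δ) t := by
  have hint : IntervalIntegrable (deriv (expDecay δ)) volume 0 x :=
    (((memLp_deriv_expDecay hδ).locallyIntegrable one_le_two).integrableOn_isCompact
      isCompact_uIcc).intervalIntegrable
  rw [integral_eq_of_hasDerivAt_off_countable _ _ (Set.countable_singleton 0)
    (continuous_expDecay δ).continuousOn
    (fun t ht => (hasDerivAt_expDecay δ ht.2).deriv ▸ hasDerivAt_expDecay δ ht.2) hint]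
  ring

end ExpDecay

lemma memH1_ofReal {f f' : ℝ → ℝ} (hf : MemLp f 2) (hf' : MemLp f' 2)
    (hftc : ∀ x, f x = f 0 + ∫ t in (0 : ℝ)..x, f' t) :
    MemH1 (fun x => (f x : ℂ)) (fun x => (f' x : ℂ)) :=
  ⟨hf.ofReal, hf'.ofReal, fun x => by
    dsimp only
    rw [intervalIntegral.integral_ofReal, hftc x]; push_cast; ring_nf⟩

lemma MemH1.const_mul {f f' : ℝ → ℂ} (h : MemH1 f f') (c : ℂ) :
    MemH1 (fun x => c * f x) (fun x => c * f' x) :=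
  ⟨h.1.const_mul c, h.2.1.const_mul c, fun x => by
    dsimp only
    rw [intervalIntegral.integral_const_mul, h.2.2 x]; ring_nf⟩

/-- The weak derivative is represented by `deriv`, which is automatically measurable; its junk
value `0` at the kink `x = 0` is invisible to the integrals in `MemH1`. -/
lemma memH1_expDecay {δ : ℝ} (hδ : 0 < δ) :
    MemH1 (fun x => (expDecay δ x : ℂ)) (fun x => ((deriv (expDecay δ) x : ℝ) : ℂ)) :=
  memH1_ofReal (memLp_expDecay hδ) (memLp_deriv_expDecay hδ) (expDecay_eq_add_integral_deriv hδ)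

/-- The existence claim in the proof of Theorem 4.2(2): for every `α > 0` there are
`u₀, u₁ ∈ H¹(ℝ)` with
`∫ (|u₀'|² + |u₁'|² + |u₁|²) < α Re(u₁(0) conj(u₀(0)))`. -/
theorem negative_value_of_form (α : ℝ) (hα : 0 < α) :
    ∃ u₀ u₀' u₁ u₁' : ℝ → ℂ, MemH1 u₀ u₀' ∧ MemH1 u₁ u₁' ∧
      (∫ x : ℝ, ‖u₀' x‖ ^ 2) + (∫ x : ℝ, ‖u₁' x‖ ^ 2) + (∫ x : ℝ, ‖u₁ x‖ ^ 2)
        < α * (u₁ 0 * (starRingEnd ℂ) (u₀ 0)).re := by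
  have hδ : 0 < α ^ 2 / 16 := by positivity
  refine ⟨_, _, _, _, (memH1_expDecay hδ).const_mul (4 / α : ℝ), memH1_expDecay one_pos, ?_⟩
  simp only [norm_mul, Complex.norm_real, Real.norm_eq_abs, mul_pow, sq_abs,
    integral_const_mul, integral_deriv_expDecay_sq hδ, integral_deriv_expDecay_sq one_pos,
    integral_expDecay_sq one_pos, expDecay_zero, Complex.ofReal_one, one_mul, mul_one,
    Complex.conj_ofReal, Complex.ofReal_re]
  calc (4 / α) ^ 2 * (α ^ 2 / 16) + 1 + 1 / 1 = 3 := by field_simp; norm_num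
    _ < 4 := by norm_num
    _ = α * (4 / α) := by field_simp
end

section
/- Let α > 1 and M > 0. Then there exists a family u : ℤ → H¹(ℝ) with u_n = 0 for all but finitely many n, such that ∑_{n∈ℤ} ∫_ℝ ( |u_n′(x)|² + n² |u_n(x)|² ) dx − α ∑_{n∈ℤ} (2n−1) · Re( u_n(0) · conj(u_{n−1}(0)) ) + M ∑_{n∈ℤ} ∫_ℝ |u_n(x)|² dx < 0. -/
/- The family `u_n = e^{-n|x|}`, `1 ≤ n ≤ N`, has energy `∑ 2n = N² + N` and mass
`∑ 1/n ≤ N`, while its coupling term is `∑_{n=2}^N (2n-1) = N² - 1`; the quadratic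
growth of the coupling wins as soon as `α > 1`. -/

open Complex MeasureTheory

noncomputable section

def expNegMulAbs (c x : ℝ) : ℝ := Real.exp (-(c * |x|))

def expNegMulAbsDeriv (c x : ℝ) : ℝ := (if 0 < x then -c else c) * expNegMulAbs c x

variable {c : ℝ}

@[simp]
lemma expNegMulAbs_zero (c : ℝ) : expNegMulAbs c 0 = 1 := by
  simp [expNegMulAbs]

lemma continuous_expNegMulAbs (c : ℝ) : Continuous (expNegMulAbs c) := by
  unfold expNegMulAbs; fun_prop

lemma measurable_expNegMulAbsDeriv (c : ℝ) : Measurable (expNegMulAbsDeriv c) :=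
  (Measurable.ite measurableSet_Ioi measurable_const measurable_const).mul
    (continuous_expNegMulAbs c).measurable

lemma expNegMulAbs_sq (c x : ℝ) : expNegMulAbs c x ^ 2 = expNegMulAbs (2 * c) x := by
  rw [expNegMulAbs, expNegMulAbs, ← Real.exp_nat_mul]
  ring_nf

lemma expNegMulAbsDeriv_sq (c x : ℝ) :
    expNegMulAbsDeriv c x ^ 2 = c ^ 2 * expNegMulAbs (2 * c) x := by
  have hc : (if 0 < x then -c else c) ^ 2 = c ^ 2 := by split_ifs <;> ring
  rw [expNegMulAbsDeriv, mul_pow, hc, expNegMulAbs_sq]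

lemma integral_expNegMulAbs (hc : 0 < c) : ∫ x, expNegMulAbs c x = 2 / c := by
  simp only [expNegMulAbs]
  rw [integral_comp_abs (f := fun y => Real.exp (-(c * y)))]
  simp_rw [← neg_mul]
  rw [integral_exp_mul_Ioi (neg_neg_of_pos hc)]
  field_simp
  simp

lemma integrable_expNegMulAbs (hc : 0 < c) : Integrable (expNegMulAbs c) :=
  .of_integral_ne_zero (by rw [integral_expNegMulAbs hc]; positivity)

lemma norm_expNegMulAbsDeriv (hc : 0 ≤ c) (x : ℝ) :
    ‖expNegMulAbsDeriv c x‖ = c * expNegMulAbs c x := by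
  rw [Real.norm_eq_abs, ← sq_eq_sq₀ (abs_nonneg _) (by unfold expNegMulAbs; positivity),
    sq_abs, expNegMulAbsDeriv_sq, mul_pow, expNegMulAbs_sq]

lemma integrable_expNegMulAbsDeriv (hc : 0 < c) : Integrable (expNegMulAbsDeriv c) :=
  ((integrable_expNegMulAbs hc).const_mul c).mono'
    (measurable_expNegMulAbsDeriv c).aestronglyMeasurable
    (.of_forall fun x => (norm_expNegMulAbsDeriv hc.le x).le)

lemma hasDerivAt_expNegMulAbs (c : ℝ) {x : ℝ} (hx : x ≠ 0) :
    HasDerivAt (expNegMulAbs c) (expNegMulAbsDeriv c x) x := by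
  have h : HasDerivAt (expNegMulAbs c) (Real.exp (-(c * |x|)) * -(c * SignType.sign x)) x :=
    ((hasDerivAt_abs hx).const_mul c).neg.exp
  refine h.congr_deriv ?_
  rcases hx.lt_or_gt with hx | hx
  · simp [expNegMulAbsDeriv, expNegMulAbs, hx, hx.not_gt, mul_comm]
  · simp [expNegMulAbsDeriv, expNegMulAbs, hx, mul_comm]

lemma expNegMulAbs_eq_one_add_integral (hc : 0 < c) (x : ℝ) :
    expNegMulAbs c x = 1 + ∫ t in (0 : ℝ)..x, expNegMulAbsDeriv c t := by
  rw [integral_eq_of_hasDerivAt_off_countable _ _ (Set.countable_singleton 0)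
    (continuous_expNegMulAbs c).continuousOn
    (fun t ht => hasDerivAt_expNegMulAbs c ht.2)
    (integrable_expNegMulAbsDeriv hc).intervalIntegrable]
  simp

lemma memLp_two_expNegMulAbs (hc : 0 < c) : MemLp (expNegMulAbs c) 2 volume := by
  rw [memLp_two_iff_integrable_sq (continuous_expNegMulAbs c).aestronglyMeasurable]
  simp_rw [expNegMulAbs_sq]
  exact integrable_expNegMulAbs (by positivity)

lemma memLp_two_expNegMulAbsDeriv (hc : 0 < c) : MemLp (expNegMulAbsDeriv c) 2 volume := by
  rw [memLp_two_iff_integrable_sq (measurable_expNegMulAbsDeriv c).aestronglyMeasurable]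
  simp_rw [expNegMulAbsDeriv_sq]
  exact (integrable_expNegMulAbs (by positivity)).const_mul _

lemma memH1_expNegMulAbs (hc : 0 < c) :
    MemH1 (fun x => (expNegMulAbs c x : ℂ)) (fun x => (expNegMulAbsDeriv c x : ℂ)) := by
  refine ⟨(memLp_two_expNegMulAbs hc).ofReal, (memLp_two_expNegMulAbsDeriv hc).ofReal,
    fun x => ?_⟩
  simp only [intervalIntegral.integral_ofReal, expNegMulAbs_zero, ofReal_one]
  exact_mod_cast expNegMulAbs_eq_one_add_integral hc x

lemma integral_norm_sq_expNegMulAbs (hc : 0 < c) :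
    ∫ x, ‖(expNegMulAbs c x : ℂ)‖ ^ 2 = 1 / c := by
  simp_rw [norm_real, Real.norm_eq_abs, sq_abs, expNegMulAbs_sq]
  rw [integral_expNegMulAbs (by positivity)]
  field_simp

lemma integral_energy_expNegMulAbs (hc : 0 < c) :
    ∫ x, (‖(expNegMulAbsDeriv c x : ℂ)‖ ^ 2 + c ^ 2 * ‖(expNegMulAbs c x : ℂ)‖ ^ 2) = 2 * c := by
  simp_rw [norm_real, Real.norm_eq_abs, sq_abs, expNegMulAbsDeriv_sq, expNegMulAbs_sq,
    ← two_mul, ← mul_assoc]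
  rw [integral_const_mul, integral_expNegMulAbs (by positivity)]
  field_simp

lemma tsum_ite_mem {α β : Type*} [AddCommMonoid α] [TopologicalSpace α] (s : Finset β)
    (f : β → α) [DecidablePred (· ∈ s)] : ∑' b, (if b ∈ s then f b else 0) = ∑ b ∈ s, f b :=
  (tsum_eq_sum fun _ hb => if_neg hb).trans (Finset.sum_congr rfl fun _ hb => if_pos hb)

lemma sum_Icc_two_mul_sub_one (N : ℕ) : ∑ n ∈ Finset.Icc (1 : ℤ) N, (2 * (n : ℝ) - 1) = N ^ 2 := by
  induction N with
  | zero => simp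
  | succ N ih =>
    rw [Nat.cast_succ, ← Finset.insert_Icc_right_eq_Icc_add_one (by omega),
      Finset.sum_insert (by simp), ih]
    push_cast
    ring

/-- Mode `n` decays at rate `n`, the minimiser of `c + n² / c`, which is the energy
`∫ |u'|² + n² |u|²` of `u = e^{-c|x|}`. -/
def expNegMulAbsChain (N : ℕ) (n : ℤ) : ℝ → ℂ :=
  if n ∈ Finset.Icc 1 (N : ℤ) then fun x => expNegMulAbs n x else 0

def expNegMulAbsChainDeriv (N : ℕ) (n : ℤ) : ℝ → ℂ :=
  if n ∈ Finset.Icc 1 (N : ℤ) then fun x => expNegMulAbsDeriv n x else 0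

variable {N : ℕ}

lemma memH1_expNegMulAbsChain (N : ℕ) (n : ℤ) :
    MemH1 (expNegMulAbsChain N n) (expNegMulAbsChainDeriv N n) := by
  unfold expNegMulAbsChain expNegMulAbsChainDeriv
  split_ifs with hn
  · exact memH1_expNegMulAbs (by simp at hn; exact_mod_cast hn.1)
  · exact ⟨.zero, .zero, fun x => by simp⟩

lemma tsum_energy_expNegMulAbsChain (N : ℕ) :
    ∑' n : ℤ, ∫ x, (‖expNegMulAbsChainDeriv N n x‖ ^ 2
      + (n : ℝ) ^ 2 * ‖expNegMulAbsChain N n x‖ ^ 2) = N ^ 2 + N := by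
  have h (n : ℤ) : ∫ x, (‖expNegMulAbsChainDeriv N n x‖ ^ 2
      + (n : ℝ) ^ 2 * ‖expNegMulAbsChain N n x‖ ^ 2)
      = if n ∈ Finset.Icc 1 (N : ℤ) then (2 * (n : ℝ) - 1) + 1 else 0 := by
    unfold expNegMulAbsChain expNegMulAbsChainDeriv
    split_ifs with hn
    · rw [integral_energy_expNegMulAbs (by simp at hn; exact_mod_cast hn.1)]
      ring
    · simp
  simp_rw [h]
  rw [tsum_ite_mem, Finset.sum_add_distrib, sum_Icc_two_mul_sub_one]
  simp

lemma tsum_mass_expNegMulAbsChain_le (N : ℕ) :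
    ∑' n : ℤ, ∫ x, ‖expNegMulAbsChain N n x‖ ^ 2 ≤ N := by
  have h (n : ℤ) : ∫ x, ‖expNegMulAbsChain N n x‖ ^ 2
      = if n ∈ Finset.Icc 1 (N : ℤ) then 1 / (n : ℝ) else 0 := by
    unfold expNegMulAbsChain
    split_ifs with hn
    · exact integral_norm_sq_expNegMulAbs (by simp at hn; exact_mod_cast hn.1)
    · simp
  simp_rw [h]
  rw [tsum_ite_mem]
  calc ∑ n ∈ Finset.Icc 1 (N : ℤ), 1 / (n : ℝ) ≤ ∑ n ∈ Finset.Icc 1 (N : ℤ), 1 := by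
        refine Finset.sum_le_sum fun n hn => ?_
        have hn : (1 : ℝ) ≤ n := by simp at hn; exact_mod_cast hn.1
        exact div_le_one_of_le₀ hn (by linarith)
    _ = N := by simp

lemma tsum_cross_expNegMulAbsChain (hN : 1 ≤ N) :
    ∑' n : ℤ, (2 * (n : ℝ) - 1) *
      (expNegMulAbsChain N n 0 * (starRingEnd ℂ) (expNegMulAbsChain N (n - 1) 0)).re
      = N ^ 2 - 1 := by
  have h (n : ℤ) : (2 * (n : ℝ) - 1) *
      (expNegMulAbsChain N n 0 * (starRingEnd ℂ) (expNegMulAbsChain N (n - 1) 0)).re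
      = if n ∈ Finset.Icc 2 (N : ℤ) then 2 * (n : ℝ) - 1 else 0 := by
    unfold expNegMulAbsChain
    split_ifs <;> simp_all <;> omega
  simp_rw [h]
  rw [tsum_ite_mem, ← sum_Icc_two_mul_sub_one N,
    ← Finset.insert_Icc_add_one_left_eq_Icc (by omega : (1 : ℤ) ≤ N), Finset.sum_insert (by simp)]
  norm_num

lemma exists_nat_mul_add_lt_mul_sq {a b ε : ℝ} (hε : 0 < ε) (hb : 0 ≤ b) :
    ∃ N : ℕ, 1 ≤ N ∧ a * N + b < ε * N ^ 2 := by
  obtain ⟨N, hN⟩ := exists_nat_gt ((|a| + b) / ε)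
  refine ⟨N + 1, by omega, ?_⟩
  have hN1 : (1 : ℝ) ≤ (N + 1 : ℕ) := by simp
  have hεN : |a| + b < ε * (N + 1 : ℕ) := by
    rw [div_lt_iff₀ hε] at hN
    push_cast
    linarith
  nlinarith [le_abs_self a]

end

/-- Remark 4.3: for `α > 1` the quadratic form `𝐥_α[U] = 𝐥₀[U] - α 𝐛[U]` is unbounded
from below: for every `M > 0` there is a finitely supported family `u : ℤ → H¹(ℝ)` with
`∑ ∫ (|u_n'|² + n²|u_n|²) - α ∑ (2n-1) Re(u_n(0) conj(u_{n-1}(0))) + M ∑ ∫ |u_n|² < 0`. -/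
theorem form_unbounded_below (α : ℝ) (hα : 1 < α) (M : ℝ) (hM : 0 < M) :
    ∃ u u' : ℤ → ℝ → ℂ,
      (∀ n : ℤ, MemH1 (u n) (u' n)) ∧
      (∃ S : Finset ℤ, ∀ n : ℤ, n ∉ S → u n = 0 ∧ u' n = 0) ∧
      (∑' n : ℤ, ∫ x : ℝ, (‖u' n x‖ ^ 2 + (n : ℝ) ^ 2 * ‖u n x‖ ^ 2))
        - α * (∑' n : ℤ, (2 * (n : ℝ) - 1) * (u n 0 * (starRingEnd ℂ) (u (n - 1) 0)).re)
        + M * (∑' n : ℤ, ∫ x : ℝ, ‖u n x‖ ^ 2) < 0 := by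
  obtain ⟨N, hN1, hN⟩ :=
    exists_nat_mul_add_lt_mul_sq (a := 1 + M) (b := α) (sub_pos.2 hα) (by linarith)
  refine ⟨expNegMulAbsChain N, expNegMulAbsChainDeriv N, memH1_expNegMulAbsChain N,
    ⟨Finset.Icc 1 N, fun n hn => ⟨if_neg hn, if_neg hn⟩⟩, ?_⟩
  rw [tsum_energy_expNegMulAbsChain, tsum_cross_expNegMulAbsChain hN1]
  have hmass := mul_le_mul_of_nonneg_left (tsum_mass_expNegMulAbsChain_le N) hM.le
  linarith
end

section
/- Let u : {1, 2, 3, …} → H¹(ℝ) be a family of functions with M := ∑_{n≥1} ∫_ℝ ( |u_n′(x)|² + n² |u_n(x)|² ) dx < ∞. Then the series ∑_{n≥2} (2n−1) · Im( u_n(0) · conj(u_{n−1}(0)) ) converges absolutely and | ∑_{n≥2} (2n−1) · Im( u_n(0) · conj(u_{n−1}(0)) ) | ≤ M. -/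
open Complex MeasureTheory

/-!
For `f ∈ H¹(ℝ)` the function `‖f‖²` is absolutely continuous with derivative `2 Re(f̄ f')`, and
it is integrable, so it tends to `0` at `±∞`. Integrating from `0` to `+∞` and from `-∞` to `0`
gives `2‖f 0‖² ≤ ∫ |2 Re(f̄ f')|`, and AM–GM turns this into the trace bound
`2c‖f 0‖² ≤ ∫ ‖f'‖² + c²‖f‖²`; with `c = n` it bounds `2n‖u_n(0)‖²` by the `n`-th term of `M`.
Finally `(2n-1)|Im(u_n(0) conj u_{n-1}(0))| ≤ (2n-1)(‖u_n(0)‖² + ‖u_{n-1}(0)‖²)/2`, and in the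
sum over `n` each `‖u_k(0)‖²` collects the weights `(2k-1)/2` and `(2k+1)/2`, that is exactly `2k`.
-/

open Set Filter Topology ENNReal

lemma volume_eq_top_of_mem_atTop {s : Set ℝ} (hs : s ∈ atTop) : volume s = ∞ := by
  obtain ⟨b, hb⟩ := mem_atTop_sets.1 hs
  exact top_le_iff.1 (Real.volume_Ici (a := b) ▸ measure_mono hb)

lemma volume_eq_top_of_mem_atBot {s : Set ℝ} (hs : s ∈ atBot) : volume s = ∞ := by
  obtain ⟨b, hb⟩ := mem_atBot_sets.1 hs
  exact top_le_iff.1 (Real.volume_Iic (a := b) ▸ measure_mono hb)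

section VanishingAtInfinity

variable {E : Type*} [NormedAddCommGroup E] [NormedSpace ℝ E] {g φ : ℝ → E}

lemma eq_neg_setIntegral_Ioi_of_eq_add_intervalIntegral
    (hg : ∀ x, g x = g 0 + ∫ t in 0..x, φ t) (hφ : IntegrableOn φ (Ioi 0))
    (hgi : IntegrableOn g (Ioi 0)) : g 0 = -∫ t in Ioi 0, φ t := by
  have hlim : Tendsto g atTop (𝓝 (g 0 + ∫ t in Ioi 0, φ t)) :=
    (tendsto_const_nhds.add (intervalIntegral_tendsto_integral_Ioi 0 hφ tendsto_id)).congr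
      fun x ↦ (hg x).symm
  exact eq_neg_of_add_eq_zero_left <| IntegrableAtFilter.eq_zero_of_tendsto
    ⟨Ioi 0, Ioi_mem_atTop 0, hgi⟩ (fun _ ↦ volume_eq_top_of_mem_atTop) hlim

lemma eq_setIntegral_Iic_of_eq_add_intervalIntegral
    (hg : ∀ x, g x = g 0 + ∫ t in 0..x, φ t) (hφ : IntegrableOn φ (Iic 0))
    (hgi : IntegrableOn g (Iic 0)) : g 0 = ∫ t in Iic 0, φ t := by
  have hlim : Tendsto g atBot (𝓝 (g 0 - ∫ t in Iic 0, φ t)) := by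
    refine (tendsto_const_nhds.sub (intervalIntegral_tendsto_integral_Iic 0 hφ tendsto_id)).congr
      fun x ↦ ?_
    rw [hg x, intervalIntegral.integral_symm x, id, sub_eq_add_neg]
  exact sub_eq_zero.1 <| IntegrableAtFilter.eq_zero_of_tendsto
    ⟨Iic 0, Iic_mem_atBot 0, hgi⟩ (fun _ ↦ volume_eq_top_of_mem_atBot) hlim

lemma two_mul_norm_le_integral_norm_of_eq_add_intervalIntegral
    (hg : ∀ x, g x = g 0 + ∫ t in 0..x, φ t) (hφ : Integrable φ) (hgi : Integrable g) :
    2 * ‖g 0‖ ≤ ∫ t, ‖φ t‖ :=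
  calc 2 * ‖g 0‖ = ‖(∫ t in Iic 0, φ t) - ∫ t in Ioi 0, φ t‖ := by
        rw [← eq_setIntegral_Iic_of_eq_add_intervalIntegral hg hφ.integrableOn hgi.integrableOn,
          ← neg_eq_iff_eq_neg.2 (eq_neg_setIntegral_Ioi_of_eq_add_intervalIntegral hg
            hφ.integrableOn hgi.integrableOn), sub_neg_eq_add, ← two_smul ℝ, norm_smul]
        norm_num
    _ ≤ (∫ t in Iic 0, ‖φ t‖) + ∫ t in Ioi 0, ‖φ t‖ :=
        (norm_sub_le _ _).trans (add_le_add (norm_integral_le_integral_norm _)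
          (norm_integral_le_integral_norm _))
    _ = ∫ t, ‖φ t‖ :=
        intervalIntegral.integral_Iic_add_Ioi hφ.norm.integrableOn hφ.norm.integrableOn

end VanishingAtInfinity

lemma absolutelyContinuousOnInterval_comp_of_eq_add_intervalIntegral {f f' : ℝ → ℂ} {a b : ℝ}
    (hf' : LocallyIntegrable f' volume) (hf : ∀ x, f x = f a + ∫ t in a..x, f' t)
    (L : ℂ →L[ℝ] ℝ) : AbsolutelyContinuousOnInterval (fun x ↦ L (f x)) a b := by
  have hint : ∀ x, IntervalIntegrable f' volume a x := fun x ↦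
    (hf'.integrableOn_isCompact isCompact_uIcc).intervalIntegrable
  have hLf : (fun x ↦ L (f x)) = fun x ↦ L (f a) + ∫ t in a..x, L (f' t) := by
    funext x
    rw [hf x, map_add, L.intervalIntegral_comp_comm (hint x)]
  rw [hLf]
  exact contDiffOn_const.absolutelyContinuousOnInterval.add <|
    IntervalIntegrable.absolutelyContinuousOnInterval_intervalIntegral
      ⟨L.integrable_comp (hint b).1, L.integrable_comp (hint b).2⟩ left_mem_uIcc

lemma norm_sq_eq_norm_sq_add_intervalIntegral_of_eq_add_intervalIntegral {f f' : ℝ → ℂ} {a b : ℝ}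
    (hf' : LocallyIntegrable f' volume) (hf : ∀ x, f x = f a + ∫ t in a..x, f' t) :
    ‖f b‖ ^ 2 = ‖f a‖ ^ 2 + ∫ t in a..b, 2 * ((starRingEnd ℂ) (f t) * f' t).re := by
  have hac : AbsolutelyContinuousOnInterval (fun x ↦ ‖f x‖ ^ 2) a b := by
    have hre := absolutelyContinuousOnInterval_comp_of_eq_add_intervalIntegral (b := b) hf' hf reCLM
    have him := absolutelyContinuousOnInterval_comp_of_eq_add_intervalIntegral (b := b) hf' hf imCLM
    have hnorm : (fun x ↦ ‖f x‖ ^ 2) = (fun x ↦ reCLM (f x)) * (fun x ↦ reCLM (f x)) +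
        (fun x ↦ imCLM (f x)) * (fun x ↦ imCLM (f x)) := by
      funext x
      simp [Complex.sq_norm, normSq_apply]
    rw [hnorm]
    exact (hre.mul hre).add (him.mul him)
  have hderiv : ∀ᵐ t, HasDerivAt f (f' t) t := by
    filter_upwards [LocallyIntegrable.ae_hasDerivAt_integral hf'] with t ht
    rw [funext hf]
    exact (ht a).const_add _
  rw [← sub_eq_iff_eq_add', ← hac.integral_deriv_eq_sub]
  refine intervalIntegral.integral_congr_ae ?_
  filter_upwards [hderiv] with t ht _
  rw [ht.norm_sq.deriv, Complex.inner, mul_comm (f' t)]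

lemma mul_abs_two_mul_re_conj_mul_le {c : ℝ} (hc : 0 ≤ c) (z w : ℂ) :
    c * |2 * ((starRingEnd ℂ) z * w).re| ≤ ‖w‖ ^ 2 + c ^ 2 * ‖z‖ ^ 2 := by
  have h : |((starRingEnd ℂ) z * w).re| ≤ ‖z‖ * ‖w‖ := by
    simpa using abs_re_le_norm ((starRingEnd ℂ) z * w)
  rw [abs_mul, abs_two]
  nlinarith [sq_nonneg (‖w‖ - c * ‖z‖)]

theorem MemH1.two_mul_mul_norm_sq_le_integral {f f' : ℝ → ℂ} (hf : MemH1 f f') {c : ℝ}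
    (hc : 0 ≤ c) : 2 * c * ‖f 0‖ ^ 2 ≤ ∫ x, (‖f' x‖ ^ 2 + c ^ 2 * ‖f x‖ ^ 2) := by
  obtain ⟨hf2, hf'2, hrep⟩ := hf
  set φ : ℝ → ℝ := fun t ↦ 2 * ((starRingEnd ℂ) (f t) * f' t).re
  have hφ : Integrable φ := (hf2.star.integrable_mul hf'2).re.const_mul 2
  have hg : Integrable fun x ↦ ‖f x‖ ^ 2 := hf2.integrable_norm_pow two_ne_zero
  have htrace : 2 * ‖‖f 0‖ ^ 2‖ ≤ ∫ t, ‖φ t‖ :=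
    two_mul_norm_le_integral_norm_of_eq_add_intervalIntegral
      (fun x ↦ norm_sq_eq_norm_sq_add_intervalIntegral_of_eq_add_intervalIntegral
        (hf'2.locallyIntegrable one_le_two) hrep) hφ hg
  calc 2 * c * ‖f 0‖ ^ 2 = c * (2 * ‖‖f 0‖ ^ 2‖) := by
        rw [Real.norm_of_nonneg (by positivity)]; ring
    _ ≤ c * ∫ t, ‖φ t‖ := by gcongr
    _ = ∫ t, c * ‖φ t‖ := (integral_const_mul _ _).symm
    _ ≤ ∫ x, (‖f' x‖ ^ 2 + c ^ 2 * ‖f x‖ ^ 2) :=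
        integral_mono (hφ.norm.const_mul c)
          ((hf'2.integrable_norm_pow two_ne_zero).add (hg.const_mul _))
          fun t ↦ mul_abs_two_mul_re_conj_mul_le hc (f t) (f' t)

lemma abs_im_mul_conj_le (z w : ℂ) : |(z * (starRingEnd ℂ) w).im| ≤ (‖z‖ ^ 2 + ‖w‖ ^ 2) / 2 := by
  have h : |(z * (starRingEnd ℂ) w).im| ≤ ‖z‖ * ‖w‖ := by
    simpa using abs_im_le_norm (z * (starRingEnd ℂ) w)
  nlinarith [sq_nonneg (‖z‖ - ‖w‖)]

lemma tsum_shift_add_le_tsum_add {p q : ℕ → ℝ} (hp : Summable p) (hq : Summable q)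
    (hp0 : 0 ≤ p 0) : ∑' n, (p (n + 1) + q n) ≤ ∑' n, (p n + q n) := by
  rw [((summable_nat_add_iff 1).2 hp).tsum_add hq, hp.tsum_add hq, hp.tsum_eq_zero_add]
  linarith

theorem summable_and_abs_tsum_le_of_two_mul_mul_norm_sq_le {a : ℕ → ℂ} {I : ℕ → ℝ}
    (hI : Summable I) (ha : ∀ k : ℕ, 2 * ((k : ℝ) + 1) * ‖a k‖ ^ 2 ≤ I k) :
    (Summable fun n : ℕ ↦
        |(2 * ((n : ℝ) + 2) - 1) * (a (n + 1) * (starRingEnd ℂ) (a n)).im|) ∧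
      |∑' n : ℕ, (2 * ((n : ℝ) + 2) - 1) * (a (n + 1) * (starRingEnd ℂ) (a n)).im|
        ≤ ∑' n, I n := by
  set T : ℕ → ℝ := fun n ↦ (2 * ((n : ℝ) + 2) - 1) * (a (n + 1) * (starRingEnd ℂ) (a n)).im
  set p : ℕ → ℝ := fun k ↦ (2 * k + 1) / 2 * ‖a k‖ ^ 2
  set q : ℕ → ℝ := fun k ↦ (2 * k + 3) / 2 * ‖a k‖ ^ 2
  have hp0 : ∀ k, 0 ≤ p k := fun k ↦ by positivity
  have hq0 : ∀ k, 0 ≤ q k := fun k ↦ by positivity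
  have hpq : ∀ k, p k + q k ≤ I k := fun k ↦ by linear_combination ha k
  have hp : Summable p := hI.of_nonneg_of_le hp0 fun k ↦ by linarith [hpq k, hq0 k]
  have hq : Summable q := hI.of_nonneg_of_le hq0 fun k ↦ by linarith [hpq k, hp0 k]
  have hT : ∀ n, |T n| ≤ p (n + 1) + q n := fun n ↦ by
    have hcoef : (0 : ℝ) ≤ 2 * ((n : ℝ) + 2) - 1 := by linarith [n.cast_nonneg (α := ℝ)]
    calc |T n| ≤ (2 * ((n : ℝ) + 2) - 1) * ((‖a (n + 1)‖ ^ 2 + ‖a n‖ ^ 2) / 2) := by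
          rw [abs_mul, abs_of_nonneg hcoef]
          exact mul_le_mul_of_nonneg_left (abs_im_mul_conj_le _ _) hcoef
      _ = p (n + 1) + q n := by simp only [p, q]; push_cast; ring
  have hT_abs : Summable fun n ↦ |T n| :=
    .of_nonneg_of_le (fun n ↦ abs_nonneg _) hT (((summable_nat_add_iff 1).2 hp).add hq)
  refine ⟨hT_abs, ?_⟩
  calc |∑' n, T n| ≤ ∑' n, |T n| := by
          simpa only [Real.norm_eq_abs] using norm_tsum_le_tsum_norm (f := T) hT_abs
    _ ≤ ∑' n, (p (n + 1) + q n) :=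
        hT_abs.tsum_le_tsum hT (((summable_nat_add_iff 1).2 hp).add hq)
    _ ≤ ∑' n, (p n + q n) := tsum_shift_add_le_tsum_add hp hq (hp0 0)
    _ ≤ ∑' n, I n := (hp.add hq).tsum_le_tsum hpq hI

/-- Inequality (2A.3a): for a family `u : {1,2,3,…} → H¹(ℝ)` with
`M = ∑_{n≥1} ∫ (|u_n'|² + n²|u_n|²) < ∞`, the series
`∑_{n≥2} (2n-1) Im(u_n(0) conj(u_{n-1}(0)))` converges absolutely and is bounded
in modulus by `M`.  (Here the index `n ≥ 1` is encoded as `n + 1`, `n : ℕ`.) -/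
theorem strip_form_bound (u u' : ℕ → ℝ → ℂ)
    (hH1 : ∀ n : ℕ, 1 ≤ n → MemH1 (u n) (u' n))
    (hsum : Summable fun n : ℕ =>
      ∫ x : ℝ, (‖u' (n + 1) x‖ ^ 2 + ((n : ℝ) + 1) ^ 2 * ‖u (n + 1) x‖ ^ 2)) :
    (Summable fun n : ℕ =>
        |(2 * ((n : ℝ) + 2) - 1) * (u (n + 2) 0 * (starRingEnd ℂ) (u (n + 1) 0)).im|) ∧
      |∑' n : ℕ, (2 * ((n : ℝ) + 2) - 1) * (u (n + 2) 0 * (starRingEnd ℂ) (u (n + 1) 0)).im|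
        ≤ ∑' n : ℕ, ∫ x : ℝ, (‖u' (n + 1) x‖ ^ 2 + ((n : ℝ) + 1) ^ 2 * ‖u (n + 1) x‖ ^ 2) :=
  summable_and_abs_tsum_le_of_two_mul_mul_norm_sq_le (a := fun k ↦ u (k + 1) 0) hsum fun k ↦
    (hH1 (k + 1) k.succ_pos).two_mul_mul_norm_sq_le_integral (by positivity)
end

section
/- For integers n ≥ 3 define j_n := (n − 1/2) / ( 2 (n²−1)^{1/4} (n²−2n)^{1/4} ). Then j_n > 1/2 for every n ≥ 3, and there exists a constant C > 0 such that j_n − 1/2 ≤ C·n^{−2} for all n ≥ 3; in particular j_n → 1/2 as n → ∞. -/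
/-!
Since `(x - 1/2)^4 = (x^2 - 1)(x^2 - 2x) + (5/2 x^2 - 5/2 x + 1/16)`, the fourth power of `2 j_x`
is `1 + δ` with `0 < δ ≤ 9 / x^2` for `x ≥ 3`. Hence `2 j_x > 1`, and Bernoulli's inequality
`(1 + δ)^{1/4} ≤ 1 + δ/4` gives `j_x - 1/2 ≤ δ/8`.
-/

open Real Filter

noncomputable def jacobiEntry (x : ℝ) : ℝ :=
  (x - 1 / 2) / (2 * (x ^ 2 - 1) ^ ((1 : ℝ) / 4) * (x ^ 2 - 2 * x) ^ ((1 : ℝ) / 4))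

noncomputable def jacobiEntryDefect (x : ℝ) : ℝ :=
  (5 / 2 * x ^ 2 - 5 / 2 * x + 1 / 16) / ((x ^ 2 - 1) * (x ^ 2 - 2 * x))

section

variable {x : ℝ}

lemma jacobiEntry_eq (hx : 2 < x) :
    jacobiEntry x = (1 + jacobiEntryDefect x) ^ ((1 : ℝ) / 4) / 2 := by
  have ha : 0 < x ^ 2 - 1 := by nlinarith
  have hb : 0 < x ^ 2 - 2 * x := by nlinarith
  have hp := (mul_pos ha hb).ne'
  have hratio : 1 + jacobiEntryDefect x = (x - 1 / 2) ^ 4 / ((x ^ 2 - 1) * (x ^ 2 - 2 * x)) := by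
    rw [jacobiEntryDefect, eq_div_iff hp, add_mul, div_mul_cancel₀ _ hp]
    ring
  have hroot : ((x - 1 / 2) ^ 4) ^ ((1 : ℝ) / 4) = x - 1 / 2 := by
    rw [← rpow_natCast, ← rpow_mul (by linarith)]
    norm_num
  rw [jacobiEntry, hratio, div_rpow (by positivity : (0 : ℝ) ≤ (x - 1 / 2) ^ 4) (mul_pos ha hb).le,
    hroot, mul_rpow ha.le hb.le]
  field_simp

lemma jacobiEntryDefect_pos (hx : 2 < x) : 0 < jacobiEntryDefect x := by
  have ha : 0 < x ^ 2 - 1 := by nlinarith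
  have hb : 0 < x ^ 2 - 2 * x := by nlinarith
  exact div_pos (by nlinarith) (by positivity)

lemma jacobiEntryDefect_le (hx : 3 ≤ x) : jacobiEntryDefect x ≤ 9 / x ^ 2 := by
  have hp : 0 < (x ^ 2 - 1) * (x ^ 2 - 2 * x) := mul_pos (by nlinarith) (by nlinarith)
  rw [jacobiEntryDefect, div_le_div_iff₀ hp (by positivity)]
  nlinarith [mul_nonneg (sub_nonneg.2 hx) (sq_nonneg x), sq_nonneg (x - 3),
    mul_nonneg (mul_nonneg (sub_nonneg.2 hx) (sq_nonneg x)) (sub_nonneg.2 hx)]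

lemma half_lt_jacobiEntry (hx : 2 < x) : 1 / 2 < jacobiEntry x := by
  rw [jacobiEntry_eq hx]
  have : 1 < (1 + jacobiEntryDefect x) ^ ((1 : ℝ) / 4) :=
    one_lt_rpow (by linarith [jacobiEntryDefect_pos hx]) (by norm_num)
  linarith

lemma jacobiEntry_sub_half_le_defect (hx : 2 < x) :
    jacobiEntry x - 1 / 2 ≤ jacobiEntryDefect x / 8 := by
  rw [jacobiEntry_eq hx]
  have := rpow_one_add_le_one_add_mul_self (s := jacobiEntryDefect x)
    (by linarith [jacobiEntryDefect_pos hx]) (p := 1 / 4) (by norm_num) (by norm_num)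
  linarith

lemma jacobiEntry_sub_half_le (hx : 3 ≤ x) :
    jacobiEntry x - 1 / 2 ≤ 9 / 8 * x ^ (-(2 : ℝ)) := by
  rw [rpow_neg (by linarith), rpow_two, ← div_eq_mul_inv, div_div, mul_comm, ← div_div]
  linarith [jacobiEntry_sub_half_le_defect (by linarith : 2 < x), jacobiEntryDefect_le hx]

end

lemma tendsto_jacobiEntry_atTop : Tendsto jacobiEntry atTop (nhds (1 / 2)) := by
  have hupper : Tendsto (fun x : ℝ => 1 / 2 + 9 / 8 * x ^ (-(2 : ℝ))) atTop (nhds (1 / 2)) := by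
    simpa using ((tendsto_rpow_neg_atTop (by norm_num : (0 : ℝ) < 2)).const_mul (9 / 8)).const_add
      (1 / 2 : ℝ)
  refine tendsto_of_tendsto_of_tendsto_of_le_of_le' tendsto_const_nhds hupper ?_ ?_
  · filter_upwards [eventually_gt_atTop 2] with x hx using (half_lt_jacobiEntry hx).le
  · filter_upwards [eventually_ge_atTop 3] with x hx
    linarith [jacobiEntry_sub_half_le hx]

/-- The off-diagonal Jacobi entries
`j_n = (n - 1/2) / (2 (n²-1)^{1/4} (n²-2n)^{1/4})` satisfy `j_n > 1/2` for `n ≥ 3`,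
`j_n - 1/2 = O(n^{-2})`, and in particular `j_n → 1/2`. -/
theorem jacobi_entries_asymptotics :
    (∀ n : ℕ, 3 ≤ n →
        1 / 2 < ((n : ℝ) - 1 / 2) /
          (2 * ((n : ℝ) ^ 2 - 1) ^ ((1 : ℝ) / 4) * ((n : ℝ) ^ 2 - 2 * n) ^ ((1 : ℝ) / 4))) ∧
      (∃ C : ℝ, 0 < C ∧ ∀ n : ℕ, 3 ≤ n →
        ((n : ℝ) - 1 / 2) /
            (2 * ((n : ℝ) ^ 2 - 1) ^ ((1 : ℝ) / 4) * ((n : ℝ) ^ 2 - 2 * n) ^ ((1 : ℝ) / 4))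
          - 1 / 2 ≤ C * (n : ℝ) ^ (-(2 : ℝ))) ∧
      Tendsto (fun n : ℕ =>
          ((n : ℝ) - 1 / 2) /
            (2 * ((n : ℝ) ^ 2 - 1) ^ ((1 : ℝ) / 4) * ((n : ℝ) ^ 2 - 2 * n) ^ ((1 : ℝ) / 4)))
        atTop (nhds (1 / 2)) := by
  have hcast : ∀ n : ℕ, 3 ≤ n → (3 : ℝ) ≤ n := fun n hn => by exact_mod_cast hn
  refine ⟨fun n hn => half_lt_jacobiEntry (by linarith [hcast n hn]),
    ⟨9 / 8, by norm_num, fun n hn => jacobiEntry_sub_half_le (hcast n hn)⟩, ?_⟩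
  exact tendsto_jacobiEntry_atTop.comp tendsto_natCast_atTop_atTop
end
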